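/- Let d ≥ 1, let Ω ⊆ ℝ^d be a nonempty bounded open set, let ε > 0 and k > 0, and let u, w ∈ V. If the modified Crank–Nicolson equation tested with u − w holds, i.e. (1/k)∫_Ω (u − w)² dx + ∫_Ω ⟨(∇u + ∇w)/2, ∇(u − w)⟩ dx + (1/ε²)∫_Ω F̃[u(x), w(x)](u(x) − w(x)) dx = 0, then J_ε(u) + (1/k)∫_Ω (u − w)² dx = J_ε(w). -/

import Mathlib

open MeasureTheory Set RealInnerProductSpace

/-- The secant slope `F̃[a,b]` of the double-well potential `F(u) = ¼(u²−1)²`. -/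
noncomputable def Ftilde (a b : ℝ) : ℝ :=
  if a = b then a ^ 3 - a
  else (1 / 4 * (a ^ 2 - 1) ^ 2 - 1 / 4 * (b ^ 2 - 1) ^ 2) / (a - b)

/-!
Tested with `u - w`, both spatial terms of the scheme telescope pointwise: by polarization
`⟪½(∇u + ∇w), ∇u - ∇w⟫ = ½‖∇u‖² - ½‖∇w‖²`, and `F̃[a,b](a - b) = F(a) - F(b)` holds identically
(also for `a = b`). On the bounded set `Ω` all these continuous integrands are integrable, so the
integrals split accordingly and the identity is linear bookkeeping.
-/

theorem Ftilde_mul_sub (a b : ℝ) :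
    Ftilde a b * (a - b) = 1 / 4 * (a ^ 2 - 1) ^ 2 - 1 / 4 * (b ^ 2 - 1) ^ 2 := by
  unfold Ftilde
  split_ifs with h
  · simp [h]
  · exact div_mul_cancel₀ _ (sub_ne_zero.mpr h)

theorem real_inner_half_smul_add_sub {F : Type*} [NormedAddCommGroup F] [InnerProductSpace ℝ F]
    (x y : F) : ⟪(1 / 2 : ℝ) • (x + y), x - y⟫ = 1 / 2 * ‖x‖ ^ 2 - 1 / 2 * ‖y‖ ^ 2 := by
  rw [real_inner_smul_left, inner_add_left, inner_sub_right, inner_sub_right,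
    real_inner_self_eq_norm_sq, real_inner_self_eq_norm_sq, real_inner_comm y x]
  ring

theorem Continuous.integrableOn_of_isBounded {X E : Type*} [MetricSpace X] [ProperSpace X]
    [MeasurableSpace X] [OpensMeasurableSpace X] [NormedAddCommGroup E] {μ : Measure X}
    [IsFiniteMeasureOnCompacts μ] {f : X → E} {s : Set X} (hf : Continuous f)
    (hs : Bornology.IsBounded s) : IntegrableOn f s μ :=
  (hf.continuousOn.integrableOn_compact hs.isCompact_closure).mono_set subset_closure

section Gradient

variable {F : Type*} [NormedAddCommGroup F] [InnerProductSpace ℝ F] [CompleteSpace F]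
  {f g : F → ℝ}

theorem gradient_fun_sub {x : F} (hf : DifferentiableAt ℝ f x) (hg : DifferentiableAt ℝ g x) :
    gradient (fun y => f y - g y) x = gradient f x - gradient g x := by
  simp only [gradient, fderiv_fun_sub hf hg, map_sub]

theorem ContDiff.continuous_gradient (hf : ContDiff ℝ 1 f) : Continuous (gradient f) :=
  (InnerProductSpace.toDual ℝ F).symm.continuous.comp (hf.continuous_fderiv one_ne_zero)

end Gradient

section Integrals

variable {E : Type*} [NormedAddCommGroup E] [InnerProductSpace ℝ E] [FiniteDimensional ℝ E]
  [MeasurableSpace E] [BorelSpace E] {μ : Measure E} [IsFiniteMeasureOnCompacts μ] {Ω : Set E}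
  {u w : E → ℝ}

theorem integral_inner_half_smul_gradient_add_gradient_sub (hΩ : Bornology.IsBounded Ω)
    (hu : ContDiff ℝ 1 u) (hw : ContDiff ℝ 1 w) :
    ∫ x in Ω, ⟪(1 / 2 : ℝ) • (gradient u x + gradient w x),
        gradient (fun y => u y - w y) x⟫ ∂μ
      = (∫ x in Ω, 1 / 2 * ‖gradient u x‖ ^ 2 ∂μ) - ∫ x in Ω, 1 / 2 * ‖gradient w x‖ ^ 2 ∂μ := by
  have hpointwise (x : E) :
      ⟪(1 / 2 : ℝ) • (gradient u x + gradient w x), gradient (fun y => u y - w y) x⟫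
        = 1 / 2 * ‖gradient u x‖ ^ 2 - 1 / 2 * ‖gradient w x‖ ^ 2 := by
    rw [gradient_fun_sub (hu.differentiable one_ne_zero x) (hw.differentiable one_ne_zero x),
      real_inner_half_smul_add_sub]
  simp_rw [hpointwise]
  exact integral_sub
    ((continuous_const.mul (hu.continuous_gradient.norm.pow 2)).integrableOn_of_isBounded hΩ)
    ((continuous_const.mul (hw.continuous_gradient.norm.pow 2)).integrableOn_of_isBounded hΩ)

theorem integral_Ftilde_mul_sub (hΩ : Bornology.IsBounded Ω) (hu : Continuous u)
    (hw : Continuous w) :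
    ∫ x in Ω, Ftilde (u x) (w x) * (u x - w x) ∂μ
      = (∫ x in Ω, 1 / 4 * (u x ^ 2 - 1) ^ 2 ∂μ) - ∫ x in Ω, 1 / 4 * (w x ^ 2 - 1) ^ 2 ∂μ := by
  simp_rw [Ftilde_mul_sub]
  exact integral_sub
    ((by fun_prop : Continuous fun x => 1 / 4 * (u x ^ 2 - 1) ^ 2).integrableOn_of_isBounded hΩ)
    ((by fun_prop : Continuous fun x => 1 / 4 * (w x ^ 2 - 1) ^ 2).integrableOn_of_isBounded hΩ)

theorem integral_energy_density_eq_add (hΩ : Bornology.IsBounded Ω) (hu : ContDiff ℝ 1 u) (c : ℝ) :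
    ∫ x in Ω, (1 / 2 * ‖gradient u x‖ ^ 2 + c * (1 / 4 * (u x ^ 2 - 1) ^ 2)) ∂μ
      = (∫ x in Ω, 1 / 2 * ‖gradient u x‖ ^ 2 ∂μ) + c * ∫ x in Ω, 1 / 4 * (u x ^ 2 - 1) ^ 2 ∂μ := by
  have hgrad := hu.continuous_gradient
  have hu₀ := hu.continuous
  rw [integral_add ((by fun_prop : Continuous fun x => 1 / 2 * ‖gradient u x‖ ^ 2)
      |>.integrableOn_of_isBounded hΩ)
    ((by fun_prop : Continuous fun x => c * (1 / 4 * (u x ^ 2 - 1) ^ 2))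
      |>.integrableOn_of_isBounded hΩ), integral_const_mul c]

end Integrals

theorem stmt_14_general (d : ℕ)
    (Ω : Set (EuclideanSpace ℝ (Fin d)))
    (hΩbd : Bornology.IsBounded Ω)
    (ε k : ℝ)
    (J : (EuclideanSpace ℝ (Fin d) → ℝ) → ℝ)
    (hJ : ∀ v, J v = ∫ x in Ω,
      (1 / 2 * ‖gradient v x‖ ^ 2 + 1 / ε ^ 2 * (1 / 4 * ((v x) ^ 2 - 1) ^ 2)))
    (u w : EuclideanSpace ℝ (Fin d) → ℝ)
    (hu : ContDiff ℝ 1 u) (hw : ContDiff ℝ 1 w)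
    (hscheme : 1 / k * (∫ x in Ω, (u x - w x) ^ 2)
      + (∫ x in Ω, ⟪(1 / 2 : ℝ) • (gradient u x + gradient w x),
          gradient (fun y => u y - w y) x⟫)
      + 1 / ε ^ 2 * (∫ x in Ω, Ftilde (u x) (w x) * (u x - w x)) = 0) :
    J u + 1 / k * (∫ x in Ω, (u x - w x) ^ 2) = J w := by
  rw [integral_inner_half_smul_gradient_add_gradient_sub hΩbd hu hw,
    integral_Ftilde_mul_sub hΩbd hu.continuous hw.continuous] at hscheme
  rw [hJ, hJ, integral_energy_density_eq_add hΩbd hu, integral_energy_density_eq_add hΩbd hw]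
  linarith

/-- Lemma 4.2: the modified Crank–Nicolson scheme for the Allen–Cahn equation is
unconditionally energy stable, with the exact discrete energy identity. -/
theorem stmt_14 (d : ℕ) (hd : 1 ≤ d)
    (Ω : Set (EuclideanSpace ℝ (Fin d))) (hΩne : Ω.Nonempty)
    (hΩbd : Bornology.IsBounded Ω) (hΩop : IsOpen Ω)
    (ε k : ℝ) (hε : 0 < ε) (hk0 : 0 < k)
    (J : (EuclideanSpace ℝ (Fin d) → ℝ) → ℝ)
    (hJ : ∀ v, J v = ∫ x in Ω,
      (1 / 2 * ‖gradient v x‖ ^ 2 + 1 / ε ^ 2 * (1 / 4 * ((v x) ^ 2 - 1) ^ 2)))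
    (u w : EuclideanSpace ℝ (Fin d) → ℝ)
    (hu : ContDiff ℝ 1 u) (hw : ContDiff ℝ 1 w)
    (hscheme : 1 / k * (∫ x in Ω, (u x - w x) ^ 2)
      + (∫ x in Ω, ⟪(1 / 2 : ℝ) • (gradient u x + gradient w x),
          gradient (fun y => u y - w y) x⟫)
      + 1 / ε ^ 2 * (∫ x in Ω, Ftilde (u x) (w x) * (u x - w x)) = 0) :
    J u + 1 / k * (∫ x in Ω, (u x - w x) ^ 2) = J w :=
  stmt_14_general d Ω hΩbd ε k J hJ u w hu hw hscheme
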